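/- arXiv:1308.2427 — 2 statements merged into one kernel-verified Lean document; each statement's English description precedes it below -/
import Mathlib

section
/- Let T and S be densely defined linear operators in a complex Hilbert space H. If S is closed and the range R(S) has finite codimension in H, then TS is densely defined and (TS)* = S*T*. -/
open LinearPMap

variable {H : Type*} [NormedAddCommGroup H] [InnerProductSpace ℂ H] [CompleteSpace H]

/-- The graph of the unbounded-operator product `A ∘ B`,
i.e. the linear relation `{(x, z) : ∃ y, (x, y) ∈ graph B ∧ (y, z) ∈ graph A}`. -/
noncomputable def LinearPMap.productGraph (A B : H →ₗ.[ℂ] H) : Submodule ℂ (H × H) where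
  carrier := {p : H × H | ∃ y : H, (p.1, y) ∈ B.graph ∧ (y, p.2) ∈ A.graph}
  add_mem' := by
    rintro p q ⟨y, hy1, hy2⟩ ⟨z, hz1, hz2⟩
    exact ⟨y + z, add_mem hy1 hz1, add_mem hy2 hz2⟩
  zero_mem' := ⟨0, zero_mem _, zero_mem _⟩
  smul_mem' := by
    rintro c p ⟨y, hy1, hy2⟩
    exact ⟨c • y, Submodule.smul_mem _ c hy1, Submodule.smul_mem _ c hy2⟩

/-- The product (composition) `A ∘ B` of two unbounded operators: its domain is
`{x ∈ D(B) : B x ∈ D(A)}` and it sends `x` to `A (B x)`. -/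
noncomputable def LinearPMap.product (A B : H →ₗ.[ℂ] H) : H →ₗ.[ℂ] H :=
  (A.productGraph B).toLinearPMap

/-- An unbounded operator is normal if it is densely defined, closed and `T*T = TT*`
(equality of unbounded operators, including equality of domains). -/
def LinearPMap.IsNormalOp (T : H →ₗ.[ℂ] H) : Prop :=
  Dense (T.domain : Set H) ∧ T.IsClosed ∧ (T†).product T = T.product (T†)

/-- `B` is relatively bounded with respect to `T` (`B` is `T`-bounded): `D(T) ⊆ D(B)` and
`‖B x‖ ≤ a ‖x‖ + b ‖T x‖` on `D(T)` for some constants `a, b ≥ 0`. -/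
def LinearPMap.IsRelativelyBounded (B T : H →ₗ.[ℂ] H) : Prop :=
  T.domain ≤ B.domain ∧ ∃ a b : ℝ, 0 ≤ a ∧ 0 ≤ b ∧
    ∀ (x : H) (hxT : x ∈ T.domain) (hxB : x ∈ B.domain),
      ‖B ⟨x, hxB⟩‖ ≤ a * ‖x‖ + b * ‖T ⟨x, hxT⟩‖

/-!
Since `S` is closed, `graph S` is a Banach space and `(x, S x) ↦ S x` maps it continuously onto
`R(S)`, which is closed because it has finite codimension. By the open mapping theorem this map is
open and has bounded preimages: every `v ∈ R(S)` is `S x` with `‖x‖ ≤ C ‖v‖`. Density of `D(T)`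
gives a finite-dimensional `V ⊆ D(T)` with `H = R(S) ⊕ V` topologically, so projecting along `V`
shows that `D(T) ∩ R(S)` is dense in `R(S)`. Pulling back, `{(x, S x) : S x ∈ D(T)}` is dense in
`graph S`, and its first projection, which lies in `D(TS)`, is dense in `D(S)`, hence in `H`.

For `y ∈ D((TS)*)`, the functional `v ↦ ⟪y, T v⟫` equals `⟪(TS)* y, x⟫` on `D(T) ∩ R(S)`, where
`S x = v` with `‖x‖ ≤ C ‖v‖`; it is therefore bounded there, and on the finite-dimensional `V`
anyway, so `y ∈ D(T*)`. The identity `⟪S x, T* y⟫ = ⟪x, (TS)* y⟫` holds on the dense part of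
`graph S` above, hence on all of it by continuity: `S* T* y = (TS)* y`. The inclusion
`S*T* ⊆ (TS)*` holds for all densely defined `T`, `S` and `TS`.
-/

open scoped InnerProductSpace

section Complements

variable {𝕜 E F : Type*} [NontriviallyNormedField 𝕜]
  [NormedAddCommGroup E] [NormedSpace 𝕜 E] [NormedAddCommGroup F] [NormedSpace 𝕜 F]

theorem ContinuousLinearMap.isClosed_range_of_finiteDimensional_quotient [CompleteSpace 𝕜]
    [CompleteSpace E] [CompleteSpace F] (f : E →L[𝕜] F)
    [FiniteDimensional 𝕜 (F ⧸ f.range)] : IsClosed (f.range : Set F) := by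
  obtain ⟨W, hW⟩ := f.range.exists_isCompl
  have : FiniteDimensional 𝕜 W := (Submodule.quotientEquivOfIsCompl _ W hW).finiteDimensional
  have : CompleteSpace W := FiniteDimensional.complete 𝕜 W
  set g : E × W →L[𝕜] F := f.coprod W.subtypeL
  have hg : Function.Surjective g := fun y => by
    have hy : y ∈ f.range ⊔ W := hW.sup_eq_top ▸ Submodule.mem_top
    obtain ⟨_, ⟨x, rfl⟩, w, hw, rfl⟩ := Submodule.mem_sup.1 hy
    exact ⟨(x, ⟨w, hw⟩), rfl⟩
  -- `g` is a quotient map, and `range f` pulls back to the closed set `E × {0}`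
  have hpre : g ⁻¹' f.range = Prod.snd ⁻¹' {0} := by
    ext ⟨x, w⟩
    have hfx : f x ∈ f.range := ⟨x, rfl⟩
    simp only [Set.mem_preimage, SetLike.mem_coe, Set.mem_singleton_iff, g,
      ContinuousLinearMap.coprod_apply, Submodule.subtypeL_apply,
      Submodule.add_mem_iff_right _ hfx]
    exact ⟨fun hw => Subtype.ext (Submodule.disjoint_def.1 hW.disjoint _ hw w.2),
      fun hw => hw ▸ zero_mem _⟩
  rw [← (g.isQuotientMap hg).isClosed_preimage, hpre]
  exact isClosed_singleton.preimage continuous_snd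

theorem Submodule.exists_isTopCompl_le_of_dense [CompleteSpace 𝕜] {D R : Submodule 𝕜 E}
    (hD : Dense (D : Set E)) (hR : IsClosed (R : Set E)) [FiniteDimensional 𝕜 (E ⧸ R)] :
    ∃ V ≤ D, FiniteDimensional 𝕜 V ∧ IsTopCompl R V := by
  have hDR : Codisjoint D R := by
    have hclosed := isClosed_mono_of_finiteDimensional_quotient hR (le_sup_right : R ≤ D ⊔ R)
    rw [codisjoint_iff, ← hclosed.submodule_topologicalClosure_eq,
      ← dense_iff_topologicalClosure_eq_top]
    exact hD.mono (SetLike.coe_subset_coe.2 le_sup_left)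
  obtain ⟨V, hVD, hVR⟩ := hDR.exists_isCompl
  have : FiniteDimensional 𝕜 V := (quotientEquivOfIsCompl R V hVR.symm).finiteDimensional
  exact ⟨V, hVD, this, IsCompl.isTopCompl_of_isClosed_of_finiteDimensional hVR.symm hR⟩

namespace Submodule.IsTopCompl

variable {D R V : Submodule 𝕜 E} (h : IsTopCompl R V) (hVD : V ≤ D)
include h hVD

theorem projectionL_mem {x : E} (hx : x ∈ D) : R.projectionL V h x ∈ D := by
  rw [eq_sub_of_add_eq (projectionL_add_projectionL_eq_self h x)]
  exact D.sub_mem hx (hVD (projectionL_apply_mem _ _))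

theorem dense_preimage_coe (hD : Dense (D : Set E)) : Dense (((↑) : R → E) ⁻¹' D) := by
  refine ((projectionOntoL_surjective h).denseRange.dense_image
    (R.projectionOntoL V h).continuous hD).mono ?_
  rintro _ ⟨x, hx, rfl⟩
  exact h.projectionL_mem hVD hx

theorem continuous_of_bound [CompleteSpace 𝕜] [FiniteDimensional 𝕜 V] (φ : D →ₗ[𝕜] F) (C : ℝ)
    (hφ : ∀ x : D, (x : E) ∈ R → ‖φ x‖ ≤ C * ‖x‖) : Continuous φ := by
  set P := R.projectionL V h
  set Q := V.projectionOntoL R h.symm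
  set ψ := LinearMap.toContinuousLinearMap (φ ∘ₗ Submodule.inclusion hVD)
  refine AddMonoidHomClass.continuous_of_bound φ (|C| * ‖P‖ + ‖ψ‖ * ‖Q‖) fun x => ?_
  have hPx := h.projectionL_mem hVD x.2
  have hsplit : φ x = φ ⟨P x, hPx⟩ + ψ (Q x) := by
    rw [show ψ (Q x) = φ (inclusion hVD (Q x)) from rfl, ← _root_.map_add]
    congr 1
    exact Subtype.ext (projectionL_add_projectionL_eq_self h x).symm
  calc ‖φ x‖ ≤ ‖φ ⟨P x, hPx⟩‖ + ‖ψ (Q x)‖ := hsplit ▸ norm_add_le _ _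
    _ ≤ |C| * (‖P‖ * ‖x‖) + ‖ψ‖ * (‖Q‖ * ‖x‖) := by
        gcongr
        · calc ‖φ ⟨P x, hPx⟩‖ ≤ C * ‖P x‖ := hφ _ (projectionL_apply_mem h _)
            _ ≤ |C| * ‖P x‖ := by gcongr; exact le_abs_self C
            _ ≤ |C| * (‖P‖ * ‖x‖) := by gcongr; exact P.le_opNorm x
        · exact ψ.le_opNorm_of_le (Q.le_opNorm x)
    _ = (|C| * ‖P‖ + ‖ψ‖ * ‖Q‖) * ‖x‖ := by ring

end Submodule.IsTopCompl

end Complements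

namespace LinearPMap

section ClosedRange

variable {𝕜 E F : Type*} [NontriviallyNormedField 𝕜]
  [NormedAddCommGroup E] [NormedSpace 𝕜 E] [NormedAddCommGroup F] [NormedSpace 𝕜 F]
  {S : E →ₗ.[𝕜] F}

theorem snd_mem_range_of_mem_graph {x : E × F} (hx : x ∈ S.graph) :
    x.2 ∈ LinearMap.range S.toFun := by
  obtain ⟨y, -, hy⟩ := (mem_graph_iff S).1 hx
  exact ⟨y, hy⟩

noncomputable def graphToRange (S : E →ₗ.[𝕜] F) : S.graph →L[𝕜] LinearMap.range S.toFun :=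
  ((ContinuousLinearMap.snd 𝕜 E F).comp S.graph.subtypeL).codRestrict _
    fun x => snd_mem_range_of_mem_graph x.2

theorem graphToRange_surjective : Function.Surjective S.graphToRange := by
  rintro ⟨_, x, rfl⟩
  exact ⟨⟨_, S.mem_graph x⟩, rfl⟩

variable [CompleteSpace E] [CompleteSpace F]

theorem IsClosed.isClosed_range [CompleteSpace 𝕜] (hS : S.IsClosed)
    [FiniteDimensional 𝕜 (F ⧸ LinearMap.range S.toFun)] :
    _root_.IsClosed (LinearMap.range S.toFun : Set F) := by
  have : CompleteSpace S.graph := hS.completeSpace_coe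
  set f := (ContinuousLinearMap.snd 𝕜 E F).comp S.graph.subtypeL
  have hf : f.range = LinearMap.range S.toFun := by
    ext y
    constructor
    · rintro ⟨x, rfl⟩
      exact snd_mem_range_of_mem_graph x.2
    · rintro ⟨x, rfl⟩
      exact ⟨⟨_, S.mem_graph x⟩, rfl⟩
  have : FiniteDimensional 𝕜 (F ⧸ f.range) := hf ▸ inferInstance
  exact hf ▸ f.isClosed_range_of_finiteDimensional_quotient

variable (hS : S.IsClosed) (hR : _root_.IsClosed (LinearMap.range S.toFun : Set F))
include hS hR

theorem IsClosed.exists_mem_graph_norm_le :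
    ∃ C, ∀ y ∈ LinearMap.range S.toFun, ∃ x, (x, y) ∈ S.graph ∧ ‖x‖ ≤ C * ‖y‖ := by
  have : CompleteSpace S.graph := hS.completeSpace_coe
  have : CompleteSpace (LinearMap.range S.toFun) := hR.completeSpace_coe
  obtain ⟨C, -, hC⟩ := S.graphToRange.exists_preimage_norm_le graphToRange_surjective
  refine ⟨C, fun y hy => ?_⟩
  obtain ⟨g, hgy, hgC⟩ := hC ⟨y, hy⟩
  have hgy' : (g : E × F).2 = y := congrArg Subtype.val hgy
  have hg : ((g : E × F).1, y) ∈ S.graph := by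
    rw [← hgy']
    exact g.2
  exact ⟨_, hg, (norm_fst_le _).trans hgC⟩

theorem IsClosed.dense_preimage_graphToRange {s : Set (LinearMap.range S.toFun)} (hs : Dense s) :
    Dense (S.graphToRange ⁻¹' s) := by
  have : CompleteSpace S.graph := hS.completeSpace_coe
  have : CompleteSpace (LinearMap.range S.toFun) := hR.completeSpace_coe
  exact hs.preimage (S.graphToRange.isOpenMap graphToRange_surjective)

end ClosedRange

section Adjoint

variable {𝕜 E F : Type*} [RCLike 𝕜] [NormedAddCommGroup E] [InnerProductSpace 𝕜 E]
  [CompleteSpace E] [NormedAddCommGroup F] [InnerProductSpace 𝕜 F]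

theorem mem_graph_adjoint_iff {T : E →ₗ.[𝕜] F} (hT : Dense (T.domain : Set E)) {y : F} {z : E} :
    (y, z) ∈ T†.graph ↔ ∀ a b, (a, b) ∈ T.graph → ⟪b, y⟫_𝕜 = ⟪a, z⟫_𝕜 := by
  simp only [adjoint_graph_eq_graph_adjoint hT, Submodule.mem_adjoint_iff, sub_eq_zero]

end Adjoint

section Product

omit [CompleteSpace H] in
theorem graph_product (A B : H →ₗ.[ℂ] H) : (A.product B).graph = A.productGraph B := by
  refine Submodule.toLinearPMap_graph_eq _ ?_
  rintro ⟨x, z⟩ ⟨y, hxy, hyz⟩ (rfl : x = 0)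
  exact A.graph_fst_eq_zero_snd hyz (B.graph_fst_eq_zero_snd hxy rfl)

omit [CompleteSpace H] in
theorem mem_graph_product_iff {A B : H →ₗ.[ℂ] H} {x z : H} :
    (x, z) ∈ (A.product B).graph ↔ ∃ y, (x, y) ∈ B.graph ∧ (y, z) ∈ A.graph := by
  rw [graph_product]
  rfl

variable {T S : H →ₗ.[ℂ] H}

omit [CompleteSpace H] in
theorem dense_domain_product (hS : Dense (S.domain : Set H))
    (hG : Dense {x : S.graph | (x : H × H).2 ∈ T.domain}) :
    Dense ((T.product S).domain : Set H) := by
  have hfst : DenseRange fun x : S.graph => (x : H × H).1 :=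
    hS.mono fun x hx => ⟨⟨_, S.mem_graph ⟨x, hx⟩⟩, rfl⟩
  refine (hfst.dense_image (by fun_prop) hG).mono ?_
  rintro _ ⟨⟨⟨x, y⟩, hxy⟩, hy, rfl⟩
  exact mem_domain_of_mem_graph (mem_graph_product_iff.2 ⟨y, hxy, T.mem_graph ⟨y, hy⟩⟩)

variable (hT : Dense (T.domain : Set H)) (hS : Dense (S.domain : Set H))
  (hTS : Dense ((T.product S).domain : Set H))

include hT hS hTS in
theorem product_adjoint_le_adjoint_product : (S†).product (T†) ≤ (T.product S)† := by
  refine le_of_le_graph ?_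
  rintro ⟨y, z⟩ hyz
  obtain ⟨u, hyu, huz⟩ := mem_graph_product_iff.1 hyz
  rw [mem_graph_adjoint_iff hT] at hyu
  rw [mem_graph_adjoint_iff hS] at huz
  rw [mem_graph_adjoint_iff hTS]
  intro a c hac
  obtain ⟨b, hab, hbc⟩ := mem_graph_product_iff.1 hac
  rw [hyu b c hbc, huz a b hab]

include hTS in
theorem mem_adjoint_domain_of_mem_graph_adjoint_product {V : Submodule ℂ H}
    (hRV : Submodule.IsTopCompl (LinearMap.range S.toFun) V) (hVT : V ≤ T.domain)
    [FiniteDimensional ℂ V] {C : ℝ}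
    (hC : ∀ y ∈ LinearMap.range S.toFun, ∃ x, (x, y) ∈ S.graph ∧ ‖x‖ ≤ C * ‖y‖) {y z : H}
    (hyz : (y, z) ∈ (T.product S)†.graph) : y ∈ T†.domain := by
  rw [mem_graph_adjoint_iff hTS] at hyz
  rw [mem_adjoint_domain_iff]
  refine hRV.continuous_of_bound hVT _ (C * ‖z‖) fun b hb => ?_
  obtain ⟨a, hab, ha⟩ := hC b hb
  have hpair := hyz a (T b) (mem_graph_product_iff.2 ⟨b, hab, T.mem_graph b⟩)
  calc ‖⟪y, T b⟫_ℂ‖ = ‖⟪a, z⟫_ℂ‖ := by rw [← hpair, norm_inner_symm]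
    _ ≤ ‖a‖ * ‖z‖ := norm_inner_le_norm _ _
    _ ≤ C * ‖b‖ * ‖z‖ := by gcongr; exact ha
    _ = C * ‖z‖ * ‖b‖ := by ring

include hT hS hTS in
theorem mem_graph_adjoint_of_mem_graph_adjoint_product
    (hG : Dense {x : S.graph | (x : H × H).2 ∈ T.domain}) {y u z : H}
    (hyu : (y, u) ∈ T†.graph) (hyz : (y, z) ∈ (T.product S)†.graph) : (u, z) ∈ S†.graph := by
  rw [mem_graph_adjoint_iff hT] at hyu
  rw [mem_graph_adjoint_iff hTS] at hyz
  rw [mem_graph_adjoint_iff hS]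
  -- both sides are continuous on the graph of `S`, and they agree where `S x ∈ D(T)`
  have key : (fun x : S.graph => ⟪(x : H × H).2, u⟫_ℂ) =
      fun x : S.graph => ⟪(x : H × H).1, z⟫_ℂ := by
    refine Continuous.ext_on hG (by fun_prop) (by fun_prop) ?_
    rintro ⟨⟨a, b⟩, hab⟩ hb
    have hbc := T.mem_graph ⟨b, hb⟩
    exact (hyu b _ hbc).symm.trans (hyz a _ (mem_graph_product_iff.2 ⟨b, hab, hbc⟩))
  exact fun a b hab => congrFun key ⟨(a, b), hab⟩

end Product

end LinearPMap

/-- If `T`, `S` are densely defined, `S` is closed and `R(S)` has finite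
codimension in `H`, then `TS` is densely defined and `(TS)* = S*T*`. -/
theorem statement5 (T S : H →ₗ.[ℂ] H)
    (hT : Dense (T.domain : Set H)) (hS : Dense (S.domain : Set H))
    (hScl : S.IsClosed)
    (hcodim : FiniteDimensional ℂ (H ⧸ LinearMap.range S.toFun)) :
    Dense ((T.product S).domain : Set H) ∧ (T.product S)† = (S†).product (T†) := by
  have hR := hScl.isClosed_range
  obtain ⟨V, hVT, hV, hRV⟩ := Submodule.exists_isTopCompl_le_of_dense hT hR
  have hG := hScl.dense_preimage_graphToRange hR (hRV.dense_preimage_coe hVT hT)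
  have hTS := dense_domain_product hS hG
  obtain ⟨C, hC⟩ := hScl.exists_mem_graph_norm_le hR
  refine ⟨hTS, le_antisymm (le_of_le_graph ?_) (product_adjoint_le_adjoint_product hT hS hTS)⟩
  rintro ⟨y, z⟩ hyz
  have hy := mem_adjoint_domain_of_mem_graph_adjoint_product hTS hRV hVT hC hyz
  have hyu := (T†).mem_graph ⟨y, hy⟩
  exact mem_graph_product_iff.2
    ⟨_, hyu, mem_graph_adjoint_of_mem_graph_adjoint_product hT hS hTS hG hyu hyz⟩
end

section
/- Let A and B be (possibly unbounded) self-adjoint operators in a complex Hilbert space H such that the product AB is densely defined and self-adjoint. Then B commutes with A, i.e. BA ⊆ AB. If in addition D(BA) is dense and BA is self-adjoint, then also A commutes with B, i.e. AB ⊆ BA. -/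
open LinearPMap
open scoped InnerProductSpace

variable {H : Type*} [NormedAddCommGroup H] [InnerProductSpace ℂ H] [CompleteSpace H]

private theorem productGraph_nonsing (A B : H →ₗ.[ℂ] H) :
    ∀ (x : H × H) (_hx : x ∈ A.productGraph B) (_hx' : x.fst = 0), x.snd = 0 := by
  rintro ⟨x, z⟩ ⟨y, hy1, hy2⟩ hx
  simp only at hx
  subst hx
  have hy0 : y = 0 := B.graph_fst_eq_zero_snd hy1 rfl
  subst hy0
  exact A.graph_fst_eq_zero_snd hy2 rfl

theorem LinearPMap.product_graph_eq (A B : H →ₗ.[ℂ] H) :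
    (A.product B).graph = A.productGraph B :=
  Submodule.toLinearPMap_graph_eq _ (productGraph_nonsing A B)

theorem LinearPMap.mem_product_graph_iff (A B : H →ₗ.[ℂ] H) {x z : H} :
    (x, z) ∈ (A.product B).graph ↔ ∃ y : H, (x, y) ∈ B.graph ∧ (y, z) ∈ A.graph := by
  rw [LinearPMap.product_graph_eq]; rfl

private theorem selfadj_inner {A : H →ₗ.[ℂ] H} (hA : IsSelfAdjoint A) {a b c d : H}
    (h1 : (a, b) ∈ A.graph) (h2 : (c, d) ∈ A.graph) : ⟪b, c⟫_ℂ = ⟪a, d⟫_ℂ := by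
  have hd : Dense (A.domain : Set H) := hA.dense_domain
  have hfa := LinearPMap.adjoint_isFormalAdjoint hd
  rw [LinearPMap.isSelfAdjoint_def] at hA
  rw [hA] at hfa
  rw [LinearPMap.mem_graph_iff] at h1 h2
  obtain ⟨x, hx1, hx2⟩ := h1
  obtain ⟨y, hy1, hy2⟩ := h2
  simp only at hx1 hx2 hy1 hy2
  rw [← hx1, ← hx2, ← hy1, ← hy2]
  exact hfa x y

private theorem formal_adjoint_product {A B : H →ₗ.[ℂ] H}
    (hA : IsSelfAdjoint A) (hB : IsSelfAdjoint B) :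
    (A.product B).IsFormalAdjoint (B.product A) := by
  intro x y
  have hx : ((x : H), (A.product B) x) ∈ (A.product B).graph := (A.product B).mem_graph x
  have hy : ((y : H), (B.product A) y) ∈ (B.product A).graph := (B.product A).mem_graph y
  rw [LinearPMap.mem_product_graph_iff] at hx hy
  obtain ⟨u, hxu, huT⟩ := hx
  obtain ⟨v, hyv, hvS⟩ := hy
  calc ⟪(A.product B) x, (y : H)⟫_ℂ = ⟪u, v⟫_ℂ := selfadj_inner hA huT hyv
    _ = ⟪(x : H), (B.product A) y⟫_ℂ := selfadj_inner hB hxu hvS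

/-- For self-adjoint `A`, `B` with `AB` densely defined and self-adjoint:
`BA ⊆ AB`; if moreover `D(BA)` is dense and `BA` is self-adjoint, then `AB ⊆ BA`. -/
theorem statement10 (A B : H →ₗ.[ℂ] H)
    (hA : IsSelfAdjoint A) (hB : IsSelfAdjoint B)
    (hABd : Dense ((A.product B).domain : Set H))
    (hAB : IsSelfAdjoint (A.product B)) :
    B.product A ≤ A.product B ∧
      (Dense ((B.product A).domain : Set H) → IsSelfAdjoint (B.product A) →
        A.product B ≤ B.product A) := by
  constructor
  · have h := (formal_adjoint_product hA hB).le_adjoint hABd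
    rwa [LinearPMap.isSelfAdjoint_def.mp hAB] at h
  · intro hBAd hBA
    have h := (formal_adjoint_product hB hA).le_adjoint hBAd
    rwa [LinearPMap.isSelfAdjoint_def.mp hBA] at h
end
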